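/- Under (H1)-(H3), for every u∈U, with u^δ=u*+δ(u-u*) for δ∈(0,1) and x^δ_γ the state corresponding to u^δ, the difference quotient converges to the variational process uniformly in γ: lim_{δ→0} sup_{γ∈Γ} E[Σ_{k=0}^N |(x^δ_γ(k)-x*_γ(k))/δ - x̄_γ(k)|²] = 0. -/

import Mathlib

open MeasureTheory ProbabilityTheory Filter Set
open scoped ENNReal NNReal RealInnerProductSpace BigOperators

noncomputable section

abbrev Vec (n : ℕ) : Type := EuclideanSpace ℝ (Fin n)

def noiseFiltration {Ω : Type} [MeasurableSpace Ω] {d : ℕ} (B : ℕ → Ω → Vec d) (k : ℕ) :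
    MeasurableSpace Ω :=
  ⨆ i ∈ Finset.Icc 1 k, MeasurableSpace.comap (B i) inferInstance

structure IsAdmissible {Ω : Type} [MeasurableSpace Ω] (P : Measure Ω) {d m : ℕ}
    (B : ℕ → Ω → Vec d) (N : ℕ) (q : ℝ) (U : ℕ → Set (Vec m)) (u : ℕ → Ω → Vec m) : Prop where
  adapted : ∀ k < N, Measurable[noiseFiltration B k] (u k)
  mem_constraint : ∀ k < N, ∀ ω, u k ω ∈ U k
  lq_bound : ∫⁻ ω, ∑ k ∈ Finset.range N, (‖u k ω‖₊ : ℝ≥0∞) ^ q ∂P < ∞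

def stateSol {Ω : Type} {n m d : ℕ} (b : ℕ → Vec n × Vec m → Vec n)
    (σ : ℕ → Vec n × Vec m → Fin d → Vec n) (B : ℕ → Ω → Vec d)
    (x0 : Vec n) (u : ℕ → Ω → Vec m) : ℕ → Ω → Vec n
  | 0 => fun _ => x0
  | (k+1) => fun ω =>
      b k (stateSol b σ B x0 u k ω, u k ω) +
        ∑ i, B (k+1) ω i • σ k (stateSol b σ B x0 u k ω, u k ω) i

/-- The solution of the first variational equation along `(x*,u*)` in direction `u - u*`. -/
def varSol {Ω : Type} {n m d : ℕ} (b : ℕ → Vec n × Vec m → Vec n)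
    (σ : ℕ → Vec n × Vec m → Fin d → Vec n) (B : ℕ → Ω → Vec d)
    (xs : ℕ → Ω → Vec n) (us u : ℕ → Ω → Vec m) : ℕ → Ω → Vec n
  | 0 => fun _ => 0
  | (k+1) => fun ω =>
      fderiv ℝ (b k) (xs k ω, us k ω) (varSol b σ B xs us u k ω, u k ω - us k ω) +
        ∑ i, B (k+1) ω i •
          fderiv ℝ (fun p => σ k p i) (xs k ω, us k ω)
            (varSol b σ B xs us u k ω, u k ω - us k ω)

structure H1 {n m d : ℕ} (N : ℕ) (L : ℝ) (b : ℕ → Vec n × Vec m → Vec n)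
    (σ : ℕ → Vec n × Vec m → Fin d → Vec n) : Prop where
  bound_zero : ∀ k < N, ‖b k (0, 0)‖ + ‖σ k (0, 0)‖ ≤ L
  smooth_b : ∀ k < N, ContDiff ℝ 1 (b k)
  smooth_sigma : ∀ k < N, ContDiff ℝ 1 (σ k)
  deriv_b : ∀ k < N, ∀ p, ‖fderiv ℝ (b k) p‖ ≤ L
  deriv_sigma : ∀ k < N, ∀ p, ‖fderiv ℝ (σ k) p‖ ≤ L

structure IsModulus (ψ : ℝ → ℝ) : Prop where
  continuous : Continuous ψ
  mono : Monotone ψ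
  subadd : ∀ s t : ℝ, 0 ≤ s → 0 ≤ t → ψ (s + t) ≤ ψ s + ψ t
  zero : ψ 0 = 0

/-- Assumption (H3) for the `(x,u)`-derivatives of `b` and `σ`, uniformly in `γ`. -/
def H3bσ {n m d : ℕ} {Γ : Type} (N : ℕ) (b : Γ → ℕ → Vec n × Vec m → Vec n)
    (σ : Γ → ℕ → Vec n × Vec m → Fin d → Vec n) : Prop :=
  ∃ ψ : ℝ → ℝ, IsModulus ψ ∧ ∀ γ : Γ, ∀ k < N, ∀ p p' : Vec n × Vec m,
    ‖fderiv ℝ (b γ k) p - fderiv ℝ (b γ k) p'‖ ≤ ψ (‖p.1 - p'.1‖ + ‖p.2 - p'.2‖) ∧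
    ‖fderiv ℝ (σ γ k) p - fderiv ℝ (σ γ k) p'‖ ≤ ψ (‖p.1 - p'.1‖ + ‖p.2 - p'.2‖)

/-!
Write `D k = δ⁻¹ (x^δ k - x* k)` and `E k = D k - x̄ k`. One step of the state equation is the map
`p ↦ b p + ∑ i, β i • σ p i` with `β = B (k + 1)`; its derivative is bounded by `A L` and has
modulus of continuity `A ψ`, where `A = 1 + ∑ i, |β i|`. A first-order Taylor estimate, whose
remainder is controlled both by `ψ` and, since the derivatives are bounded by `L`, by `2 L`,
together with the discrete Gronwall inequality gives, pathwise and uniformly in `γ`,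
`‖D k‖ ≤ G T` and `‖E k‖ ≤ G min (ψ (δ R)) (2 L) R`, where `T = ∑ k, ‖u k - u* k‖`,
`R = (G + 1) T` and `G` is a product of affine functions of the `|B k i|`. Now `G` has moments of
all orders and `T` has a moment of order `q > 2`, so `G R ∈ L²` by Hölder's inequality; the factor
`min (ψ (δ R)) (2 L)` is bounded and tends to `0` with `δ`, so dominated convergence concludes.
-/

theorem norm_prod_mk_le_add {X Y : Type*} [SeminormedAddCommGroup X] [SeminormedAddCommGroup Y]
    (y : X) (w : Y) : ‖(y, w)‖ ≤ ‖y‖ + ‖w‖ :=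
  max_le_add_of_nonneg (norm_nonneg y) (norm_nonneg w)

section Taylor

variable {X Y Z : Type*} [NormedAddCommGroup X] [NormedSpace ℝ X] [NormedAddCommGroup Y]
  [NormedSpace ℝ Y] [NormedAddCommGroup Z] [NormedSpace ℝ Z]
  {g : X × Y → Z} {K : ℝ} {φ : ℝ → ℝ}

theorem norm_sub_sub_fderiv_le_min (hg : Differentiable ℝ g) (hK : ∀ p, ‖fderiv ℝ g p‖ ≤ K)
    (hφ_mono : Monotone φ)
    (hφ : ∀ p p', ‖fderiv ℝ g p - fderiv ℝ g p'‖ ≤ φ (‖p.1 - p'.1‖ + ‖p.2 - p'.2‖))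
    (p p' : X × Y) :
    ‖g p - g p' - fderiv ℝ g p' (p - p')‖ ≤
      min (φ (‖p.1 - p'.1‖ + ‖p.2 - p'.2‖)) (2 * K) * ‖p - p'‖ := by
  refine (convex_segment p' p).norm_image_sub_le_of_norm_fderiv_le' (fun z _ => hg z)
    (fun z hz => ?_) (left_mem_segment ℝ p' p) (right_mem_segment ℝ p' p)
  rw [segment_eq_image'] at hz
  obtain ⟨θ, ⟨hθ0, hθ1⟩, rfl⟩ := hz
  refine le_min ((hφ _ p').trans (hφ_mono (add_le_add ?_ ?_))) ((norm_sub_le _ _).trans ?_)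
  · simpa [norm_smul, Real.norm_of_nonneg hθ0] using mul_le_of_le_one_left (norm_nonneg _) hθ1
  · simpa [norm_smul, Real.norm_of_nonneg hθ0] using mul_le_of_le_one_left (norm_nonneg _) hθ1
  · linarith [hK (p' + θ • (p - p')), hK p']

variable {δ : ℝ}

theorem norm_inv_smul_sub_le (hg : Differentiable ℝ g) (hK : ∀ p, ‖fderiv ℝ g p‖ ≤ K)
    (hδ : 0 < δ) (x y : X) (u w : Y) :
    ‖δ⁻¹ • (g (x + δ • y, u + δ • w) - g (x, u))‖ ≤ K * (‖y‖ + ‖w‖) := by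
  have hlip := convex_univ.norm_image_sub_le_of_norm_fderiv_le (fun z _ => hg z)
    (fun z _ => hK z) (mem_univ (x, u)) (mem_univ (x + δ • y, u + δ • w))
  rw [norm_smul, Real.norm_of_nonneg (inv_nonneg.2 hδ.le), inv_mul_le_iff₀ hδ]
  calc ‖g (x + δ • y, u + δ • w) - g (x, u)‖ ≤ K * ‖δ • (y, w)‖ := by simpa using hlip
    _ = δ * (K * ‖(y, w)‖) := by rw [norm_smul, Real.norm_of_nonneg hδ.le]; ring
    _ ≤ δ * (K * (‖y‖ + ‖w‖)) := by
      gcongr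
      · exact (norm_nonneg _).trans (hK 0)
      · exact norm_prod_mk_le_add y w

theorem norm_inv_smul_sub_sub_fderiv_le (hg : Differentiable ℝ g)
    (hK : ∀ p, ‖fderiv ℝ g p‖ ≤ K) (hφ_mono : Monotone φ)
    (hφ : ∀ p p', ‖fderiv ℝ g p - fderiv ℝ g p'‖ ≤ φ (‖p.1 - p'.1‖ + ‖p.2 - p'.2‖))
    (hδ : 0 < δ) (x y v : X) (u w : Y) :
    ‖δ⁻¹ • (g (x + δ • y, u + δ • w) - g (x, u)) - fderiv ℝ g (x, u) (v, w)‖ ≤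
      min (φ (δ * (‖y‖ + ‖w‖))) (2 * K) * (‖y‖ + ‖w‖) + K * ‖y - v‖ := by
  set p : X × Y := (x + δ • y, u + δ • w)
  set D := fderiv ℝ g (x, u)
  have hp : p - (x, u) = δ • (y, w) := by simp [p]
  have hsplit : δ⁻¹ • (g p - g (x, u)) - D (v, w) =
      δ⁻¹ • (g p - g (x, u) - D (p - (x, u))) + D (y - v, 0) := by
    have hD : D (y - v, 0) = D (y, w) - D (v, w) := by
      rw [← D.map_sub, Prod.mk_sub_mk, sub_self]
    rw [hp, D.map_smul, smul_sub δ⁻¹ _ (δ • _), inv_smul_smul₀ hδ.ne', hD]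
    abel
  have hdist : ‖p.1 - x‖ + ‖p.2 - u‖ = δ * (‖y‖ + ‖w‖) := by
    simp [p, norm_smul, Real.norm_of_nonneg hδ.le, mul_add]
  have hmin_nonneg : 0 ≤ min (φ (δ * (‖y‖ + ‖w‖))) (2 * K) :=
    le_min (hdist ▸ (norm_nonneg _).trans (hφ p (x, u)))
      (by linarith [(norm_nonneg _).trans (hK 0)])
  have hrem : ‖δ⁻¹ • (g p - g (x, u) - D (p - (x, u)))‖ ≤
      min (φ (δ * (‖y‖ + ‖w‖))) (2 * K) * (‖y‖ + ‖w‖) := by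
    have := norm_sub_sub_fderiv_le_min hg hK hφ_mono hφ p (x, u)
    rw [hdist, hp, norm_smul, Real.norm_of_nonneg hδ.le] at this
    rw [hp, norm_smul, Real.norm_of_nonneg (inv_nonneg.2 hδ.le), inv_mul_le_iff₀ hδ]
    calc _ ≤ _ := this
      _ ≤ min (φ (δ * (‖y‖ + ‖w‖))) (2 * K) * (δ * (‖y‖ + ‖w‖)) := by
        gcongr; exact norm_prod_mk_le_add y w
      _ = _ := by ring
  have hlin : ‖D (y - v, 0)‖ ≤ K * ‖y - v‖ := by
    refine (D.le_opNorm _).trans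
      (mul_le_mul (hK _) ?_ (norm_nonneg _) ((norm_nonneg _).trans (hK 0)))
    simp
  rw [hsplit]
  exact (norm_add_le _ _).trans (add_le_add hrem hlin)

end Taylor

section NoiseStep

variable {E F : Type*} [NormedAddCommGroup E] [NormedSpace ℝ E] [NormedAddCommGroup F]
  [NormedSpace ℝ F] {d : ℕ}

def noiseCombination (β : Vec d) : (Fin d → F) →L[ℝ] F :=
  ∑ i, β i • ContinuousLinearMap.proj i

theorem noiseCombination_apply (β : Vec d) (z : Fin d → F) :
    noiseCombination β z = ∑ i, β i • z i := by
  simp [noiseCombination]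

def noiseFactor (β : Vec d) : ℝ := 1 + ∑ i, |β i|

theorem one_le_noiseFactor (β : Vec d) : 1 ≤ noiseFactor β :=
  le_add_of_nonneg_right (Finset.sum_nonneg fun _ _ => abs_nonneg _)

theorem norm_noiseCombination_le (β : Vec d) :
    ‖(noiseCombination β : (Fin d → F) →L[ℝ] F)‖ ≤ ∑ i, |β i| := by
  refine ContinuousLinearMap.opNorm_le_bound _ (Finset.sum_nonneg fun _ _ => abs_nonneg _)
    fun z => ?_
  rw [noiseCombination_apply, Finset.sum_mul]
  refine (norm_sum_le _ _).trans (Finset.sum_le_sum fun i _ => ?_)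
  rw [norm_smul, Real.norm_eq_abs]
  exact mul_le_mul_of_nonneg_left (norm_le_pi_norm z i) (abs_nonneg _)

theorem norm_add_noiseCombination_comp_le (β : Vec d) {S : E →L[ℝ] F}
    {T : E →L[ℝ] (Fin d → F)} {ε : ℝ} (hS : ‖S‖ ≤ ε) (hT : ‖T‖ ≤ ε) :
    ‖S + (noiseCombination β).comp T‖ ≤ noiseFactor β * ε := by
  calc ‖S + (noiseCombination β).comp T‖ ≤ ε + (∑ i, |β i|) * ε :=
        (norm_add_le _ _).trans (add_le_add hS ((ContinuousLinearMap.opNorm_comp_le _ _).trans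
          (mul_le_mul (norm_noiseCombination_le β) hT (norm_nonneg _)
            (Finset.sum_nonneg fun _ _ => abs_nonneg _))))
    _ = noiseFactor β * ε := by rw [noiseFactor]; ring

def noiseStep (b : E → F) (σ : E → Fin d → F) (β : Vec d) (p : E) : F :=
  b p + ∑ i, β i • σ p i

theorem hasFDerivAt_noiseStep {b : E → F} {σ : E → Fin d → F} (β : Vec d) {p : E}
    (hb : DifferentiableAt ℝ b p) (hσ : DifferentiableAt ℝ σ p) :
    HasFDerivAt (noiseStep b σ β) (fderiv ℝ b p + (noiseCombination β).comp (fderiv ℝ σ p)) p := by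
  have := hb.hasFDerivAt.add ((noiseCombination β).hasFDerivAt.comp p hσ.hasFDerivAt)
  convert this using 1
  ext p
  simp [noiseStep, noiseCombination_apply]

end NoiseStep

theorem le_prod_mul_of_le_mul_add {N : ℕ} {z a : ℕ → ℝ} {t : ℝ} (ha : ∀ k, 0 ≤ a k)
    (ht : 0 ≤ t) (h0 : z 0 = 0) (hstep : ∀ k < N, z (k + 1) ≤ a k * (z k + t)) :
    ∀ k ≤ N, z k ≤ (∏ l ∈ Finset.range N, (1 + a l)) * t := by
  set c : ℕ → ℝ := fun k => ∏ l ∈ Finset.range k, (1 + a l)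
  have hc_succ (k : ℕ) : c (k + 1) = c k * (1 + a k) := Finset.prod_range_succ _ _
  have hc_one : ∀ k, 1 ≤ c k := by
    intro k
    induction k with
    | zero => simp [c]
    | succ k ih => rw [hc_succ]; nlinarith [ha k]
  have hc_mono : Monotone c := monotone_nat_of_le_succ fun k => by
    rw [hc_succ]; nlinarith [ha k, hc_one k]
  -- the sharper bound `(c k - 1) * t` is the one that survives the induction step
  have hz : ∀ k ≤ N, z k ≤ (c k - 1) * t := by
    intro k
    induction k with
    | zero => simp [h0, c]
    | succ k ih =>
      intro hk
      have hzk := mul_le_mul_of_nonneg_left (add_le_add_right (ih (by omega)) t) (ha k)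
      rw [hc_succ]
      nlinarith [hstep k hk, mul_nonneg (sub_nonneg.2 (hc_one k)) ht]
  intro k hk
  nlinarith [hz k hk, mul_le_mul_of_nonneg_right (hc_mono hk) ht]

theorem sum_nnnorm_sq_le_ofReal {ι E : Type*} [SeminormedAddCommGroup E] (s : Finset ι)
    (f : ι → E) {c : ℝ} (h : ∀ i ∈ s, ‖f i‖ ≤ c) :
    ∑ i ∈ s, (‖f i‖₊ : ℝ≥0∞) ^ 2 ≤ ENNReal.ofReal (s.card * c ^ 2) := by
  calc ∑ i ∈ s, (‖f i‖₊ : ℝ≥0∞) ^ 2 ≤ ∑ _i ∈ s, ENNReal.ofReal (c ^ 2) := by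
        refine Finset.sum_le_sum fun i hi => ?_
        rw [← enorm_eq_nnnorm, ← ofReal_norm, ← ENNReal.ofReal_pow (norm_nonneg _)]
        exact ENNReal.ofReal_le_ofReal (pow_le_pow_left₀ (norm_nonneg _) (h i hi) 2)
    _ = ENNReal.ofReal (s.card * c ^ 2) := by
        rw [Finset.sum_const, nsmul_eq_mul, ENNReal.ofReal_mul (Nat.cast_nonneg _),
          ENNReal.ofReal_natCast]

section Pathwise

variable {Ω : Type} {n m d N : ℕ} {L : ℝ} {b : ℕ → Vec n × Vec m → Vec n}
  {σ : ℕ → Vec n × Vec m → Fin d → Vec n} {B : ℕ → Ω → Vec d} {x0 : Vec n}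
  {us u : ℕ → Ω → Vec m} {δ : ℝ} {k : ℕ}

theorem H1.hasFDerivAt_noiseStep (h1 : H1 N L b σ) (hk : k < N) (β : Vec d)
    (p : Vec n × Vec m) :
    HasFDerivAt (noiseStep (b k) (σ k) β)
      (fderiv ℝ (b k) p + (noiseCombination β).comp (fderiv ℝ (σ k) p)) p :=
  _root_.hasFDerivAt_noiseStep β ((h1.smooth_b k hk).differentiable one_ne_zero p)
    ((h1.smooth_sigma k hk).differentiable one_ne_zero p)

theorem H1.differentiable_noiseStep (h1 : H1 N L b σ) (hk : k < N) (β : Vec d) :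
    Differentiable ℝ (noiseStep (b k) (σ k) β) :=
  fun p => (h1.hasFDerivAt_noiseStep hk β p).differentiableAt

theorem H1.norm_fderiv_noiseStep_le (h1 : H1 N L b σ) (hk : k < N) (β : Vec d)
    (p : Vec n × Vec m) : ‖fderiv ℝ (noiseStep (b k) (σ k) β) p‖ ≤ noiseFactor β * L := by
  rw [(h1.hasFDerivAt_noiseStep hk β p).fderiv]
  exact norm_add_noiseCombination_comp_le β (h1.deriv_b k hk p) (h1.deriv_sigma k hk p)

theorem H1.norm_fderiv_noiseStep_sub_le (h1 : H1 N L b σ) (hk : k < N) (β : Vec d)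
    {p p' : Vec n × Vec m} {ε : ℝ} (hb : ‖fderiv ℝ (b k) p - fderiv ℝ (b k) p'‖ ≤ ε)
    (hσ : ‖fderiv ℝ (σ k) p - fderiv ℝ (σ k) p'‖ ≤ ε) :
    ‖fderiv ℝ (noiseStep (b k) (σ k) β) p - fderiv ℝ (noiseStep (b k) (σ k) β) p'‖ ≤
      noiseFactor β * ε := by
  rw [(h1.hasFDerivAt_noiseStep hk β p).fderiv, (h1.hasFDerivAt_noiseStep hk β p').fderiv,
    add_sub_add_comm, ← ContinuousLinearMap.comp_sub]
  exact norm_add_noiseCombination_comp_le β hb hσ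

theorem stateSol_succ (k : ℕ) (ω : Ω) :
    stateSol b σ B x0 u (k + 1) ω =
      noiseStep (b k) (σ k) (B (k + 1) ω) (stateSol b σ B x0 u k ω, u k ω) :=
  rfl

theorem H1.varSol_succ (h1 : H1 N L b σ) (hk : k < N) (xs : ℕ → Ω → Vec n) (ω : Ω) :
    varSol b σ B xs us u (k + 1) ω =
      fderiv ℝ (noiseStep (b k) (σ k) (B (k + 1) ω)) (xs k ω, us k ω)
        (varSol b σ B xs us u k ω, u k ω - us k ω) := by
  have hσ_coord (i : Fin d) (p : Vec n × Vec m) :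
      fderiv ℝ (fun p => σ k p i) p = (ContinuousLinearMap.proj i).comp (fderiv ℝ (σ k) p) :=
    (hasFDerivAt_pi'.1 ((h1.smooth_sigma k hk).differentiable one_ne_zero p).hasFDerivAt i).fderiv
  rw [(h1.hasFDerivAt_noiseStep hk _ _).fderiv]
  simp [varSol, hσ_coord, noiseCombination_apply]

def stateDiffQuot (b : ℕ → Vec n × Vec m → Vec n) (σ : ℕ → Vec n × Vec m → Fin d → Vec n)
    (B : ℕ → Ω → Vec d) (x0 : Vec n) (us u : ℕ → Ω → Vec m) (δ : ℝ) (k : ℕ) (ω : Ω) : Vec n :=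
  δ⁻¹ • (stateSol b σ B x0 (fun k ω => us k ω + δ • (u k ω - us k ω)) k ω -
    stateSol b σ B x0 us k ω)

theorem stateDiffQuot_succ (hδ : δ ≠ 0) (k : ℕ) (ω : Ω) :
    stateDiffQuot b σ B x0 us u δ (k + 1) ω =
      δ⁻¹ • (noiseStep (b k) (σ k) (B (k + 1) ω)
          (stateSol b σ B x0 us k ω + δ • stateDiffQuot b σ B x0 us u δ k ω,
            us k ω + δ • (u k ω - us k ω)) -
        noiseStep (b k) (σ k) (B (k + 1) ω) (stateSol b σ B x0 us k ω, us k ω)) := by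
  rw [stateDiffQuot, stateSol_succ, stateSol_succ, stateDiffQuot, smul_inv_smul₀ hδ,
    add_sub_cancel]

def amplification (N : ℕ) (L : ℝ) (B : ℕ → Ω → Vec d) (ω : Ω) : ℝ :=
  ∏ k ∈ Finset.range N, (1 + (L + 1) * noiseFactor (B (k + 1) ω))

def controlDistance (N : ℕ) (us u : ℕ → Ω → Vec m) (ω : Ω) : ℝ :=
  ∑ k ∈ Finset.range N, ‖u k ω - us k ω‖

theorem controlDistance_nonneg (ω : Ω) : 0 ≤ controlDistance N us u ω :=
  Finset.sum_nonneg fun _ _ => norm_nonneg _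

theorem norm_sub_le_controlDistance (hk : k < N) (ω : Ω) :
    ‖u k ω - us k ω‖ ≤ controlDistance N us u ω :=
  Finset.single_le_sum (f := fun k => ‖u k ω - us k ω‖) (fun _ _ => norm_nonneg _)
    (Finset.mem_range.2 hk)

theorem amplification_nonneg (hL : 0 ≤ L) (ω : Ω) : 0 ≤ amplification N L B ω :=
  Finset.prod_nonneg fun k _ => by positivity [one_le_noiseFactor (B (k + 1) ω)]

def perturbationBound (N : ℕ) (L : ℝ) (B : ℕ → Ω → Vec d) (us u : ℕ → Ω → Vec m) (ω : Ω) : ℝ :=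
  (amplification N L B ω + 1) * controlDistance N us u ω

theorem perturbationBound_nonneg (hL : 0 ≤ L) (ω : Ω) : 0 ≤ perturbationBound N L B us u ω :=
  mul_nonneg (by linarith [amplification_nonneg (N := N) (B := B) hL ω])
    (controlDistance_nonneg ω)

theorem H1.norm_stateDiffQuot_le (h1 : H1 N L b σ) (hL : 0 ≤ L) (hδ : 0 < δ) (ω : Ω) :
    ∀ k ≤ N, ‖stateDiffQuot b σ B x0 us u δ k ω‖ ≤
      amplification N L B ω * controlDistance N us u ω := by
  refine le_prod_mul_of_le_mul_add (fun k => by positivity [one_le_noiseFactor (B (k + 1) ω)])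
    (controlDistance_nonneg ω) (by simp [stateDiffQuot, stateSol]) fun k hk => ?_
  rw [stateDiffQuot_succ hδ.ne']
  refine (norm_inv_smul_sub_le (h1.differentiable_noiseStep hk _)
    (h1.norm_fderiv_noiseStep_le hk _) hδ _ _ _ _).trans ?_
  have hA := one_le_noiseFactor (B (k + 1) ω)
  have hu := norm_sub_le_controlDistance (us := us) (u := u) hk ω
  exact mul_le_mul (by nlinarith) (by linarith) (by positivity) (by positivity)

theorem H1.norm_stateDiffQuot_sub_varSol_le (h1 : H1 N L b σ) {ψ : ℝ → ℝ} (hψ : IsModulus ψ)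
    (h3 : ∀ k < N, ∀ p p' : Vec n × Vec m,
      ‖fderiv ℝ (b k) p - fderiv ℝ (b k) p'‖ ≤ ψ (‖p.1 - p'.1‖ + ‖p.2 - p'.2‖) ∧
      ‖fderiv ℝ (σ k) p - fderiv ℝ (σ k) p'‖ ≤ ψ (‖p.1 - p'.1‖ + ‖p.2 - p'.2‖))
    (hL : 0 ≤ L) (hδ : 0 < δ) (ω : Ω) :
    ∀ k ≤ N, ‖stateDiffQuot b σ B x0 us u δ k ω - varSol b σ B (stateSol b σ B x0 us) us u k ω‖ ≤
      amplification N L B ω * (min (ψ (δ * perturbationBound N L B us u ω)) (2 * L) *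
        perturbationBound N L B us u ω) := by
  set R := perturbationBound N L B us u ω
  have hR0 : 0 ≤ R := perturbationBound_nonneg hL ω
  have hρ : 0 ≤ min (ψ (δ * R)) (2 * L) :=
    le_min (hψ.zero ▸ hψ.mono (by positivity)) (by linarith)
  refine le_prod_mul_of_le_mul_add (fun k => by positivity [one_le_noiseFactor (B (k + 1) ω)])
    (mul_nonneg hρ hR0) (by simp [stateDiffQuot, stateSol, varSol]) fun k hk => ?_
  set A := noiseFactor (B (k + 1) ω)
  have hA : 1 ≤ A := one_le_noiseFactor _
  rw [stateDiffQuot_succ hδ.ne', h1.varSol_succ hk]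
  refine (norm_inv_smul_sub_sub_fderiv_le (h1.differentiable_noiseStep hk _)
    (h1.norm_fderiv_noiseStep_le hk _) (hψ.mono.const_mul (by positivity : 0 ≤ A))
    (fun p p' => h1.norm_fderiv_noiseStep_sub_le hk _ (h3 k hk p p').1 (h3 k hk p p').2)
    hδ _ _ _ _ _).trans ?_
  set s := ‖stateDiffQuot b σ B x0 us u δ k ω‖ + ‖u k ω - us k ω‖
  have hs : s ≤ R := by
    have := h1.norm_stateDiffQuot_le (B := B) (x0 := x0) (us := us) (u := u) hL hδ ω k hk.le
    have := norm_sub_le_controlDistance (us := us) (u := u) hk ω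
    simp only [R, perturbationBound]
    nlinarith
  have hmin : min (A * ψ (δ * s)) (2 * (A * L)) ≤ A * min (ψ (δ * R)) (2 * L) := by
    rw [mul_left_comm, ← mul_min_of_nonneg _ _ (by positivity : 0 ≤ A)]
    gcongr
    exact hψ.mono (by gcongr)
  set ρ := min (ψ (δ * R)) (2 * L)
  set e := ‖stateDiffQuot b σ B x0 us u δ k ω - varSol b σ B (stateSol b σ B x0 us) us u k ω‖
  calc min (A * ψ (δ * s)) (2 * (A * L)) * s + A * L * e ≤ A * ρ * R + A * L * e := by
        gcongr
    _ ≤ (L + 1) * A * (e + ρ * R) := by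
        have he : 0 ≤ e := norm_nonneg _
        nlinarith [mul_nonneg (by linarith : 0 ≤ A) he,
          mul_nonneg (mul_nonneg hL (by linarith : 0 ≤ A)) (mul_nonneg hρ hR0)]

theorem H1.sum_nnnorm_stateDiffQuot_sub_varSol_sq_le (h1 : H1 N L b σ) {ψ : ℝ → ℝ}
    (hψ : IsModulus ψ)
    (h3 : ∀ k < N, ∀ p p' : Vec n × Vec m,
      ‖fderiv ℝ (b k) p - fderiv ℝ (b k) p'‖ ≤ ψ (‖p.1 - p'.1‖ + ‖p.2 - p'.2‖) ∧
      ‖fderiv ℝ (σ k) p - fderiv ℝ (σ k) p'‖ ≤ ψ (‖p.1 - p'.1‖ + ‖p.2 - p'.2‖))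
    (hL : 0 ≤ L) (hδ : 0 < δ) (ω : Ω) :
    ∑ k ∈ Finset.range (N + 1), (‖stateDiffQuot b σ B x0 us u δ k ω -
        varSol b σ B (stateSol b σ B x0 us) us u k ω‖₊ : ℝ≥0∞) ^ 2 ≤
      ENNReal.ofReal ((N + 1) * min (ψ (δ * perturbationBound N L B us u ω)) (2 * L) ^ 2 *
        (amplification N L B ω * perturbationBound N L B us u ω) ^ 2) := by
  refine (sum_nnnorm_sq_le_ofReal _ _ fun k hk => h1.norm_stateDiffQuot_sub_varSol_le hψ h3 hL hδ
    ω k (Finset.mem_range_succ_iff.1 hk)).trans_eq ?_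
  rw [Finset.card_range]
  push_cast
  ring_nf

end Pathwise

section Moments

variable {Ω E : Type*} [MeasurableSpace Ω] {μ : Measure Ω} [NormedAddCommGroup E]

def HasFiniteMoments (f : Ω → E) (μ : Measure Ω) : Prop :=
  ∀ p : ℝ≥0∞, p ≠ ∞ → MemLp f p μ

theorem memLp_ofReal_of_lintegral_rpow_lt_top {f : Ω → E} {r : ℝ} (hr : 0 < r)
    (hf : AEStronglyMeasurable f μ) (h : ∫⁻ ω, (‖f ω‖₊ : ℝ≥0∞) ^ r ∂μ < ∞) :
    MemLp f (ENNReal.ofReal r) μ := by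
  refine ⟨hf, ?_⟩
  rw [eLpNorm_lt_top_iff_lintegral_rpow_enorm_lt_top (by simpa using hr) ENNReal.ofReal_ne_top,
    ENNReal.toReal_ofReal hr.le]
  simpa [enorm_eq_nnnorm] using h

theorem hasFiniteMoments_of_lintegral_rpow_lt_top [IsFiniteMeasure μ] {f : Ω → E}
    (hf : AEStronglyMeasurable f μ)
    (h : ∀ r : ℝ, 2 ≤ r → ∫⁻ ω, (‖f ω‖₊ : ℝ≥0∞) ^ r ∂μ < ∞) : HasFiniteMoments f μ := by
  intro p hp
  rcases le_total p 2 with hp2 | hp2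
  · have := memLp_ofReal_of_lintegral_rpow_lt_top two_pos hf (h 2 le_rfl)
    rw [ENNReal.ofReal_ofNat] at this
    exact this.mono_exponent hp2
  · have h2 : (2 : ℝ) ≤ p.toReal := by
      simpa using ENNReal.toReal_mono hp hp2
    simpa [ENNReal.ofReal_toReal hp] using
      memLp_ofReal_of_lintegral_rpow_lt_top (by linarith) hf (h p.toReal h2)

namespace HasFiniteMoments

theorem const [IsFiniteMeasure μ] (c : E) : HasFiniteMoments (fun _ : Ω => c) μ :=
  fun _ _ => memLp_const c

theorem add {f g : Ω → E} (hf : HasFiniteMoments f μ) (hg : HasFiniteMoments g μ) :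
    HasFiniteMoments (fun ω => f ω + g ω) μ :=
  fun p hp => (hf p hp).add (hg p hp)

theorem continuousLinearMap_comp {F : Type*} [NormedAddCommGroup F] [NormedSpace ℝ E]
    [NormedSpace ℝ F] {f : Ω → E} (hf : HasFiniteMoments f μ) (T : E →L[ℝ] F) :
    HasFiniteMoments (fun ω => T (f ω)) μ :=
  fun p hp => (hf p hp).continuousLinearMap_comp T

theorem abs {f : Ω → ℝ} (hf : HasFiniteMoments f μ) : HasFiniteMoments (fun ω => |f ω|) μ :=
  fun p hp => (hf p hp).abs

theorem finsetSum {ι : Type*} (s : Finset ι) {f : ι → Ω → E}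
    (hf : ∀ i ∈ s, HasFiniteMoments (f i) μ) : HasFiniteMoments (fun ω => ∑ i ∈ s, f i ω) μ :=
  fun p hp => memLp_finsetSum s fun i hi => hf i hi p hp

theorem mul {f g : Ω → ℝ} (hf : HasFiniteMoments f μ) (hg : HasFiniteMoments g μ) :
    HasFiniteMoments (fun ω => f ω * g ω) μ := by
  intro p hp
  have h2p : 2 * p ≠ ∞ := ENNReal.mul_ne_top ENNReal.ofNat_ne_top hp
  have : ENNReal.HolderTriple (2 * p) (2 * p) p := ⟨by
    rw [ENNReal.mul_inv (.inl two_ne_zero) (.inl ENNReal.ofNat_ne_top), ← add_mul,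
      ENNReal.inv_two_add_inv_two, one_mul]⟩
  exact (hg (2 * p) h2p).mul' (hf (2 * p) h2p)

theorem finsetProd [IsFiniteMeasure μ] {ι : Type*} (s : Finset ι) {f : ι → Ω → ℝ}
    (hf : ∀ i ∈ s, HasFiniteMoments (f i) μ) :
    HasFiniteMoments (fun ω => ∏ i ∈ s, f i ω) μ := by
  classical
  induction s using Finset.induction_on with
  | empty => simpa using const (μ := μ) (1 : ℝ)
  | insert i s hi ih =>
    simp only [Finset.prod_insert hi]
    exact (hf i (s.mem_insert_self i)).mul (ih fun j hj => hf j (Finset.mem_insert_of_mem hj))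

theorem memLp_mul {f g : Ω → ℝ} (hf : HasFiniteMoments f μ) {p q : ℝ≥0∞} (hg : MemLp g q μ)
    (hpq : p < q) : MemLp (fun ω => f ω * g ω) p μ := by
  have hinv : q⁻¹ < p⁻¹ := ENNReal.inv_lt_inv.2 hpq
  have : ENNReal.HolderTriple (p⁻¹ - q⁻¹)⁻¹ q p :=
    ⟨by rw [inv_inv, tsub_add_cancel_of_le hinv.le]⟩
  exact hg.mul' (hf _ (ENNReal.inv_ne_top.2 (tsub_pos_of_lt hinv).ne'))

end HasFiniteMoments

theorem tendsto_lintegral_ofReal_mul_of_integrable {ι : Type*} {l : Filter ι}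
    [l.IsCountablyGenerated] {F : ι → Ω → ℝ} {g : Ω → ℝ} {C : ℝ} (hg : Integrable g μ)
    (hg_nonneg : ∀ ω, 0 ≤ g ω) (hF_meas : ∀ i, AEStronglyMeasurable (F i) μ)
    (hF_le : ∀ᶠ i in l, ∀ ω, F i ω ≤ C) (hF_lim : ∀ ω, Tendsto (fun i => F i ω) l (nhds 0)) :
    Tendsto (fun i => ∫⁻ ω, ENNReal.ofReal (F i ω * g ω) ∂μ) l (nhds 0) := by
  simpa using tendsto_lintegral_filter_of_dominated_convergence' (f := fun _ => 0)
    (fun ω => ENNReal.ofReal (C * g ω))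
    (Eventually.of_forall fun i => ((hF_meas i).aemeasurable.mul hg.aemeasurable).ennreal_ofReal)
    (hF_le.mono fun i hi => ae_of_all _ fun ω =>
      ENNReal.ofReal_le_ofReal (mul_le_mul_of_nonneg_right (hi ω) (hg_nonneg ω)))
    ((hg.const_mul C).lintegral_lt_top.ne)
    (ae_of_all _ fun ω => by simpa using ENNReal.tendsto_ofReal ((hF_lim ω).mul_const (g ω)))

theorem IsModulus.tendsto_lintegral_ofReal_mul_min_sq {ψ : ℝ → ℝ} (hψ : IsModulus ψ) {L c : ℝ}
    (hL : 0 ≤ L) (hc : 0 ≤ c) {R W : Ω → ℝ} (hR : AEStronglyMeasurable R μ)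
    (hR_nonneg : ∀ ω, 0 ≤ R ω) (hW : MemLp W 2 μ) :
    Tendsto (fun δ => ∫⁻ ω, ENNReal.ofReal (c * min (ψ (δ * R ω)) (2 * L) ^ 2 * W ω ^ 2) ∂μ)
      (nhdsWithin 0 (Ioi 0)) (nhds 0) := by
  have hψ_cont := hψ.continuous
  refine tendsto_lintegral_ofReal_mul_of_integrable (C := c * (2 * L) ^ 2) hW.integrable_sq
    (fun ω => sq_nonneg _) (fun δ => Continuous.comp_aestronglyMeasurable
      (g := fun x => c * min (ψ (δ * x)) (2 * L) ^ 2) (by fun_prop) hR) ?_ (fun ω => ?_)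
  · filter_upwards [self_mem_nhdsWithin] with δ hδ ω
    have hmin : 0 ≤ min (ψ (δ * R ω)) (2 * L) :=
      le_min (hψ.zero ▸ hψ.mono (mul_nonneg (le_of_lt hδ) (hR_nonneg ω))) (by linarith)
    exact mul_le_mul_of_nonneg_left (pow_le_pow_left₀ hmin (min_le_right _ _) 2) hc
  · have hcont : Continuous fun δ => c * min (ψ (δ * R ω)) (2 * L) ^ 2 := by fun_prop
    simpa [hψ.zero, min_eq_left (by linarith : (0 : ℝ) ≤ 2 * L)] using
      (hcont.tendsto 0).mono_left nhdsWithin_le_nhds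

end Moments

section Admissible

variable {Ω : Type} [MeasurableSpace Ω] {P : Measure Ω} {d m N : ℕ} {q : ℝ}
  {U : ℕ → Set (Vec m)} {B : ℕ → Ω → Vec d} {u : ℕ → Ω → Vec m} {k : ℕ}

theorem IsAdmissible.measurable (hu : IsAdmissible P B N q U u) (hB : ∀ k, Measurable (B k))
    (hk : k < N) : Measurable (u k) :=
  (hu.adapted k hk).mono (iSup₂_le fun i _ => (hB i).comap_le) le_rfl

theorem IsAdmissible.memLp (hu : IsAdmissible P B N q U u) (hB : ∀ k, Measurable (B k))
    (hq : 0 < q) (hk : k < N) : MemLp (u k) (ENNReal.ofReal q) P :=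
  memLp_ofReal_of_lintegral_rpow_lt_top hq (hu.measurable hB hk).aestronglyMeasurable <|
    (lintegral_mono fun ω => Finset.single_le_sum (f := fun k => (‖u k ω‖₊ : ℝ≥0∞) ^ q)
      (fun _ _ => zero_le) (Finset.mem_range.2 hk)).trans_lt hu.lq_bound

theorem memLp_controlDistance {us : ℕ → Ω → Vec m} {p : ℝ≥0∞} (hus : ∀ k < N, MemLp (us k) p P)
    (hu : ∀ k < N, MemLp (u k) p P) : MemLp (controlDistance N us u) p P :=
  memLp_finsetSum _ fun k hk =>
    ((hu k (Finset.mem_range.1 hk)).sub (hus k (Finset.mem_range.1 hk))).norm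

theorem hasFiniteMoments_amplification [IsFiniteMeasure P] (L : ℝ)
    (hB : ∀ k, 1 ≤ k → k ≤ N → HasFiniteMoments (B k) P) :
    HasFiniteMoments (amplification N L B) P :=
  HasFiniteMoments.finsetProd _ fun k hk =>
    (HasFiniteMoments.const 1).add <| (HasFiniteMoments.const (L + 1)).mul <|
      (HasFiniteMoments.const 1).add <| HasFiniteMoments.finsetSum _ fun i _ =>
        ((hB (k + 1) (by omega) (Finset.mem_range.1 hk)).continuousLinearMap_comp
          (EuclideanSpace.proj i)).abs

theorem memLp_perturbationBound [IsFiniteMeasure P] {L : ℝ} {us : ℕ → Ω → Vec m} {p q : ℝ≥0∞}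
    (hB : ∀ k, 1 ≤ k → k ≤ N → HasFiniteMoments (B k) P)
    (hT : MemLp (controlDistance N us u) q P) (hpq : p < q) :
    MemLp (perturbationBound N L B us u) p P :=
  ((hasFiniteMoments_amplification L hB).add (.const 1)).memLp_mul hT hpq

theorem memLp_amplification_mul_perturbationBound [IsFiniteMeasure P] {L : ℝ}
    {us : ℕ → Ω → Vec m} {p q : ℝ≥0∞} (hB : ∀ k, 1 ≤ k → k ≤ N → HasFiniteMoments (B k) P)
    (hT : MemLp (controlDistance N us u) q P) (hpq : p < q) :
    MemLp (fun ω => amplification N L B ω * perturbationBound N L B us u ω) p P := by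
  simpa only [perturbationBound, mul_assoc] using
    ((hasFiniteMoments_amplification L hB).mul
      ((hasFiniteMoments_amplification L hB).add (.const 1))).memLp_mul hT hpq

end Admissible

theorem difference_quotient_converges_uniformly_general
    {n m d N : ℕ}
    {Ω : Type} [MeasurableSpace Ω] (P : Measure Ω) [IsProbabilityMeasure P]
    {Γ : Type}
    (B : ℕ → Ω → Vec d) (hBmeas : ∀ k, Measurable (B k))
    (hBmom : ∀ k, 1 ≤ k → k ≤ N → ∀ r : ℝ, 2 ≤ r →
      ∫⁻ ω, (‖B k ω‖₊ : ℝ≥0∞) ^ r ∂P < ∞)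
    (q : ℝ) (hq : 2 < q)
    (U : ℕ → Set (Vec m))
    (L : ℝ) (hL : 0 < L)
    (b : Γ → ℕ → Vec n × Vec m → Vec n) (σ : Γ → ℕ → Vec n × Vec m → Fin d → Vec n)
    (h1 : ∀ γ, H1 N L (b γ) (σ γ)) (h3 : H3bσ N b σ)
    (x0 : Vec n) (us u : ℕ → Ω → Vec m)
    (hus : IsAdmissible P B N q U us) (hu : IsAdmissible P B N q U u) :
    Tendsto
      (fun δ : ℝ => ⨆ γ : Γ,
        ∫⁻ ω, ∑ k ∈ Finset.range (N + 1),
          (‖δ⁻¹ • (stateSol (b γ) (σ γ) B x0 (fun k ω => us k ω + δ • (u k ω - us k ω)) k ω -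
              stateSol (b γ) (σ γ) B x0 us k ω) -
            varSol (b γ) (σ γ) B (stateSol (b γ) (σ γ) B x0 us) us u k ω‖₊ : ℝ≥0∞) ^ 2 ∂P)
      (nhdsWithin 0 (Set.Ioo (0 : ℝ) 1)) (nhds 0) := by
  obtain ⟨ψ, hψ, hψ_bound⟩ := h3
  have hB (k : ℕ) (hk : 1 ≤ k) (hkN : k ≤ N) : HasFiniteMoments (B k) P :=
    hasFiniteMoments_of_lintegral_rpow_lt_top (hBmeas k).aestronglyMeasurable (hBmom k hk hkN)
  have hT := memLp_controlDistance (fun k hk => hus.memLp hBmeas (by linarith) hk)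
    (fun k hk => hu.memLp hBmeas (by linarith) hk)
  have h2q : (2 : ℝ≥0∞) < ENNReal.ofReal q := by
    simpa using (ENNReal.ofReal_lt_ofReal_iff (by linarith)).2 hq
  have hlim := hψ.tendsto_lintegral_ofReal_mul_min_sq hL.le (by positivity : (0 : ℝ) ≤ N + 1)
    (memLp_perturbationBound (L := L) hB hT h2q).1 (perturbationBound_nonneg hL.le)
    (memLp_amplification_mul_perturbationBound (L := L) hB hT h2q)
  refine tendsto_of_tendsto_of_tendsto_of_le_of_le' tendsto_const_nhds
    (hlim.mono_left (nhdsWithin_mono _ Ioo_subset_Ioi_self))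
    (Eventually.of_forall fun _ => zero_le) ?_
  filter_upwards [self_mem_nhdsWithin] with δ hδ
  exact iSup_le fun γ => lintegral_mono fun ω =>
    (h1 γ).sum_nnnorm_stateDiffQuot_sub_varSol_sq_le hψ (hψ_bound γ) hL.le hδ.1 ω

/-- Lemma 3.1. Under (H1)–(H3), the difference quotient of the perturbed
state converges to the variational process in `L²`, uniformly in `γ`. -/
theorem difference_quotient_converges_uniformly
    {n m d N : ℕ} (hN : 0 < N)
    {Ω : Type} [MeasurableSpace Ω] (P : Measure Ω) [IsProbabilityMeasure P]
    (hPc : P.IsComplete)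
    {Γ : Type} [MetricSpace Γ] [PolishSpace Γ] [LocallyCompactSpace Γ]
    (B : ℕ → Ω → Vec d) (hBmeas : ∀ k, Measurable (B k))
    (hBindep : iIndepFun (fun i : Fin N => B (i + 1)) P)
    (hBmom : ∀ k, 1 ≤ k → k ≤ N → ∀ r : ℝ, 2 ≤ r →
      ∫⁻ ω, (‖B k ω‖₊ : ℝ≥0∞) ^ r ∂P < ∞)
    (q : ℝ) (hq : 2 < q)
    (U : ℕ → Set (Vec m)) (hU : ∀ k < N, (U k).Nonempty ∧ Convex ℝ (U k))
    (L : ℝ) (hL : 0 < L)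
    (b : Γ → ℕ → Vec n × Vec m → Vec n) (σ : Γ → ℕ → Vec n × Vec m → Fin d → Vec n)
    (h1 : ∀ γ, H1 N L (b γ) (σ γ)) (h3 : H3bσ N b σ)
    (x0 : Vec n) (us u : ℕ → Ω → Vec m)
    (hus : IsAdmissible P B N q U us) (hu : IsAdmissible P B N q U u) :
    Tendsto
      (fun δ : ℝ => ⨆ γ : Γ,
        ∫⁻ ω, ∑ k ∈ Finset.range (N + 1),
          (‖δ⁻¹ • (stateSol (b γ) (σ γ) B x0 (fun k ω => us k ω + δ • (u k ω - us k ω)) k ω -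
              stateSol (b γ) (σ γ) B x0 us k ω) -
            varSol (b γ) (σ γ) B (stateSol (b γ) (σ γ) B x0 us) us u k ω‖₊ : ℝ≥0∞) ^ 2 ∂P)
      (nhdsWithin 0 (Set.Ioo (0 : ℝ) 1)) (nhds 0) :=
  difference_quotient_converges_uniformly_general P B hBmeas hBmom q hq U L hL b σ h1 h3 x0 us u hus
    hu

end
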